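/- Let c₁, c₂, c₃ ∈ ℂ be nonzero and let v ∈ H₃ be the vector with v(1,0,0) = c₁, v(0,1,0) = c₂, v(0,0,1) = c₃, and all other entries 0. Then v lies in the W SLOCC class: there exist A₁, A₂, A₃ ∈ SL(2,ℂ) and λ ∈ ℂ, λ ≠ 0, such that v = λ·(A₁⊗A₂⊗A₃)w₃. -/

import Mathlib

open scoped BigOperators

/-- The three-qubit Hilbert space. -/
abbrev H3 := (Fin 2 × Fin 2 × Fin 2) → ℂ

/-- Squared Hermitian norm of a vector in `H3`. -/
noncomputable def normSq3 (v : H3) : ℝ := ∑ x : Fin 2 × Fin 2 × Fin 2, Complex.normSq (v x)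

/-- First one-qubit reduced density matrix. -/
noncomputable def rho1 (v : H3) : Matrix (Fin 2) (Fin 2) ℂ :=
  Matrix.of fun a a' => ∑ b : Fin 2, ∑ c : Fin 2, v (a, b, c) * star (v (a', b, c))

/-- Second one-qubit reduced density matrix. -/
noncomputable def rho2 (v : H3) : Matrix (Fin 2) (Fin 2) ℂ :=
  Matrix.of fun b b' => ∑ a : Fin 2, ∑ c : Fin 2, v (a, b, c) * star (v (a, b', c))

/-- Third one-qubit reduced density matrix. -/
noncomputable def rho3 (v : H3) : Matrix (Fin 2) (Fin 2) ℂ :=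
  Matrix.of fun c c' => ∑ a : Fin 2, ∑ b : Fin 2, v (a, b, c) * star (v (a, b, c'))

/-- Minimal (real) eigenvalue of a 2×2 complex matrix. -/
noncomputable def minEig (ρ : Matrix (Fin 2) (Fin 2) ℂ) : ℝ :=
  sInf {t : ℝ | (t : ℂ) ∈ spectrum ℂ ρ}

noncomputable def p1 (v : H3) : ℝ := minEig (rho1 v)
noncomputable def p2 (v : H3) : ℝ := minEig (rho2 v)
noncomputable def p3 (v : H3) : ℝ := minEig (rho3 v)

/-- The action of a triple of 2×2 matrices on `H3` by the tensor product. -/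
noncomputable def tensor3 (A1 A2 A3 : Matrix (Fin 2) (Fin 2) ℂ) (v : H3) : H3 :=
  fun x => ∑ a' : Fin 2, ∑ b' : Fin 2, ∑ c' : Fin 2,
    A1 x.1 a' * A2 x.2.1 b' * A3 x.2.2 c' * v (a', b', c')

/-- Local unitary equivalence of three-qubit states. -/
def LUequiv (v w : H3) : Prop :=
  ∃ U1 U2 U3 : Matrix (Fin 2) (Fin 2) ℂ,
    U1 ∈ Matrix.unitaryGroup (Fin 2) ℂ ∧ U2 ∈ Matrix.unitaryGroup (Fin 2) ℂ ∧
    U3 ∈ Matrix.unitaryGroup (Fin 2) ℂ ∧ w = tensor3 U1 U2 U3 v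

/-- The three-qubit W state. -/
noncomputable def wState : H3 := fun x =>
  if (x.1 = 1 ∧ x.2.1 = 0 ∧ x.2.2 = 0) ∨ (x.1 = 0 ∧ x.2.1 = 1 ∧ x.2.2 = 0) ∨
      (x.1 = 0 ∧ x.2.1 = 0 ∧ x.2.2 = 1)
  then ((1 / Real.sqrt 3 : ℝ) : ℂ) else 0

/-- The SLOCC class of the W state. -/
def WClass : Set H3 :=
  {v | ∃ (A1 A2 A3 : Matrix (Fin 2) (Fin 2) ℂ) (l : ℂ),
    A1.det = 1 ∧ A2.det = 1 ∧ A3.det = 1 ∧ l ≠ 0 ∧ v = l • tensor3 A1 A2 A3 wState}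

/-! Scaling the three qubits of `wState` by `diag(sᵢ⁻¹, sᵢ) ∈ SL(2,ℂ)` multiplies its amplitude on
`|100⟩` by `s₁/(s₂s₃)`, and similarly for `|010⟩`, `|001⟩`; after the global factor `√3·s₁s₂s₃`
the amplitudes become `s₁², s₂², s₃²`. Every nonzero `cᵢ` is such a square. -/

noncomputable def generalizedW (c1 c2 c3 : ℂ) : H3 := fun x =>
  if x = ((1 : Fin 2), (0 : Fin 2), (0 : Fin 2)) then c1
  else if x = ((0 : Fin 2), (1 : Fin 2), (0 : Fin 2)) then c2
  else if x = ((0 : Fin 2), (0 : Fin 2), (1 : Fin 2)) then c3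
  else 0

theorem tensor3_diagonal_apply (f g h : Fin 2 → ℂ) (v : H3) (x : Fin 2 × Fin 2 × Fin 2) :
    tensor3 (Matrix.diagonal f) (Matrix.diagonal g) (Matrix.diagonal h) v x =
      f x.1 * g x.2.1 * h x.2.2 * v x := by
  simp [tensor3, Matrix.diagonal_apply, ite_mul, Finset.sum_ite_eq]

theorem det_diagonal_inv_self {s : ℂ} (hs : s ≠ 0) : (Matrix.diagonal ![s⁻¹, s]).det = 1 := by
  simp [Matrix.det_diagonal, Fin.prod_univ_two, hs]

theorem smul_tensor3_diagonal_wState {s1 s2 s3 : ℂ} (hs1 : s1 ≠ 0) (hs2 : s2 ≠ 0) (hs3 : s3 ≠ 0) :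
    ((Real.sqrt 3 : ℂ) * s1 * s2 * s3) • tensor3 (Matrix.diagonal ![s1⁻¹, s1])
        (Matrix.diagonal ![s2⁻¹, s2]) (Matrix.diagonal ![s3⁻¹, s3]) wState =
      generalizedW (s1 ^ 2) (s2 ^ 2) (s3 ^ 2) := by
  funext ⟨a, b, c⟩
  fin_cases a <;> fin_cases b <;> fin_cases c <;>
    simp [tensor3_diagonal_apply, wState, generalizedW] <;> field_simp

theorem generalizedW_sq_mem_WClass {s1 s2 s3 : ℂ} (hs1 : s1 ≠ 0) (hs2 : s2 ≠ 0) (hs3 : s3 ≠ 0) :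
    generalizedW (s1 ^ 2) (s2 ^ 2) (s3 ^ 2) ∈ WClass :=
  ⟨_, _, _, _, det_diagonal_inv_self hs1, det_diagonal_inv_self hs2, det_diagonal_inv_self hs3,
    by simp [hs1, hs2, hs3], (smul_tensor3_diagonal_wState hs1 hs2 hs3).symm⟩

theorem generalized_W_states_lie_in_W_SLOCC_class
    (c1 c2 c3 : ℂ) (h1 : c1 ≠ 0) (h2 : c2 ≠ 0) (h3 : c3 ≠ 0) :
    (fun x : Fin 2 × Fin 2 × Fin 2 =>
      if x = ((1 : Fin 2), (0 : Fin 2), (0 : Fin 2)) then c1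
      else if x = ((0 : Fin 2), (1 : Fin 2), (0 : Fin 2)) then c2
      else if x = ((0 : Fin 2), (0 : Fin 2), (1 : Fin 2)) then c3
      else 0) ∈ WClass := by
  obtain ⟨s1, rfl⟩ := IsAlgClosed.exists_pow_nat_eq c1 two_pos
  obtain ⟨s2, rfl⟩ := IsAlgClosed.exists_pow_nat_eq c2 two_pos
  obtain ⟨s3, rfl⟩ := IsAlgClosed.exists_pow_nat_eq c3 two_pos
  exact generalizedW_sq_mem_WClass (ne_zero_pow two_ne_zero h1) (ne_zero_pow two_ne_zero h2)
    (ne_zero_pow two_ne_zero h3)
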